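/- arXiv:2102.08157 — 4 statements merged into one kernel-verified Lean document; each statement's English description precedes it below -/
import Mathlib

section
/- Let 0 < λ < 1 and λ ≤ ρ < 1. Let K' be a 2×2 real symmetric positive definite matrix such that the matrix [[1,ρ],[ρ,1]] − K' is positive semidefinite. Then (1/2)·log(2πe·K'₁₁) + (1/2)·log(2πe·K'₂₂) − ((1+λ)/2)·log((2πe)²·det K') ≥ (1/2)·log(1/(1−λ²)) − (λ/2)·log((2πe)²·(1−ρ)²·(1+λ)/(1−λ)). -/
/-! With `t = √(K'₀₀ K'₁₁)` and `m = |K'₀₁|`, the right-hand side is `-λ log (2πe)` plus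
`log t - ((1 + λ) / 2) log (t² - m²)`, which is decreasing in `t`. The constraint
`K' ⪯ [[1, ρ], [ρ, 1]]` forces `t ≤ 1 - ρ + m`, and at `t = 1 - ρ + m` concavity of `log`, with
weights `(1 ± λ) / 2`, bounds the value below uniformly in `m` (with equality at
`m = λ (1 - ρ) / (1 - λ)`). -/

open Real

namespace Matrix

lemma PosSemidef.sq_apply_zero_one_le {A : Matrix (Fin 2) (Fin 2) ℝ} (hA : A.PosSemidef) :
    A 0 1 ^ 2 ≤ A 0 0 * A 1 1 := by
  have hsymm : A 1 0 = A 0 1 := by simpa using (hA.isHermitian.apply 1 0).symm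
  have hdet := hA.det_nonneg
  rw [det_fin_two, hsymm] at hdet
  linarith

end Matrix

lemma sqrt_mul_le_sub_add_abs {a b c ρ : ℝ} (ha : 0 ≤ a) (hb : 0 ≤ b) (hab : a * b ≤ 1)
    (h : (ρ - c) ^ 2 ≤ (1 - a) * (1 - b)) :
    √(a * b) ≤ 1 - ρ + |c| := by
  set t := √(a * b)
  have ht : 0 ≤ t := sqrt_nonneg _
  have ht2 : t ^ 2 = a * b := sq_sqrt (mul_nonneg ha hb)
  have ht1 : t ≤ 1 := sqrt_le_one.mpr hab
  have am_gm : 2 * t ≤ a + b := by nlinarith [sq_nonneg (a - b), sq_nonneg (a + b - 2 * t)]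
  have hsq : (ρ - c) ^ 2 ≤ (1 - t) ^ 2 := by nlinarith
  have habs := abs_le_of_sq_le_sq' hsq (by linarith)
  linarith [habs.2, le_abs_self c]

lemma antitoneOn_log_sub_mul_log_sq_sub_sq {lam m : ℝ} (hlam : 0 ≤ lam) (hm : 0 ≤ m) :
    AntitoneOn (fun t ↦ log t - (1 + lam) / 2 * log (t ^ 2 - m ^ 2)) (Set.Ioi m) := by
  intro t (ht : m < t) s _ hts
  have ht0 : 0 < t := hm.trans_lt ht
  have hs0 : 0 < s := ht0.trans_le hts
  have hdt : 0 < t ^ 2 - m ^ 2 := by nlinarith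
  have hds : t ^ 2 - m ^ 2 ≤ s ^ 2 - m ^ 2 := by nlinarith
  -- `t ↦ t ^ 2 / (t ^ 2 - m ^ 2)` is antitone
  have hratio : s ^ 2 * (t ^ 2 - m ^ 2) ≤ t ^ 2 * (s ^ 2 - m ^ 2) := by
    nlinarith [mul_nonneg (sq_nonneg m) (show 0 ≤ s ^ 2 - t ^ 2 by nlinarith)]
  have hlog := log_le_log (mul_pos (pow_pos hs0 2) hdt) hratio
  rw [log_mul (pow_pos hs0 2).ne' hdt.ne', log_mul (pow_pos ht0 2).ne' (by linarith),
    log_pow, log_pow] at hlog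
  have hlam_log := mul_le_mul_of_nonneg_left (log_le_log hdt hds) hlam
  dsimp only
  push_cast at hlog
  linarith

lemma le_log_add_sub_mul_log_add_sq_sub_sq {lam w m : ℝ} (hlam₁ : -1 < lam) (hlam₂ : lam < 1)
    (hw : 0 < w) (hm : 0 ≤ m) :
    -lam * log w - (1 + lam) / 2 * log (1 + lam) - (1 - lam) / 2 * log (1 - lam)
      ≤ log (w + m) - (1 + lam) / 2 * log ((w + m) ^ 2 - m ^ 2) := by
  have hp : 0 < 1 + lam := by linarith
  have hq : 0 < 1 - lam := by linarith
  have hjensen := strictConcaveOn_log_Ioi.concaveOn.2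
    (show 0 < (w + 2 * m) / (1 + lam) from div_pos (by linarith) hp)
    (show 0 < w / (1 - lam) by positivity)
    (show 0 ≤ (1 + lam) / 2 by positivity) (show 0 ≤ (1 - lam) / 2 by positivity) (by ring)
  have hmean : (1 + lam) / 2 * ((w + 2 * m) / (1 + lam)) + (1 - lam) / 2 * (w / (1 - lam))
      = w + m := by
    field_simp; ring
  simp only [smul_eq_mul, hmean] at hjensen
  rw [log_div (by linarith) hp.ne', log_div hw.ne' hq.ne'] at hjensen
  rw [show (w + m) ^ 2 - m ^ 2 = w * (w + 2 * m) by ring, log_mul hw.ne' (by linarith)]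
  linarith

lemma half_log_mul_add_half_log_mul_sub_mul_log_mul {lam κ a b d : ℝ} (hκ : 0 < κ) (ha : 0 < a)
    (hb : 0 < b) (hd : 0 < d) :
    (1 / 2) * log (κ * a) + (1 / 2) * log (κ * b) - ((1 + lam) / 2) * log (κ ^ 2 * d)
      = -lam * log κ + (log √(a * b) - (1 + lam) / 2 * log d) := by
  rw [log_sqrt (by positivity), log_mul hκ.ne' ha.ne', log_mul hκ.ne' hb.ne',
    log_mul (by positivity) hd.ne', log_mul ha.ne' hb.ne', log_pow]
  push_cast
  ring

lemma half_log_one_div_sub_mul_log_mul {lam κ w : ℝ} (hlam₁ : -1 < lam) (hlam₂ : lam < 1)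
    (hκ : 0 < κ) (hw : 0 < w) :
    (1 / 2) * log (1 / (1 - lam ^ 2)) - (lam / 2) * log (κ ^ 2 * w ^ 2 * (1 + lam) / (1 - lam))
      = -lam * log κ
        + (-lam * log w - (1 + lam) / 2 * log (1 + lam) - (1 - lam) / 2 * log (1 - lam)) := by
  have hp : 0 < 1 + lam := by linarith
  have hq : 0 < 1 - lam := by linarith
  rw [one_div (1 - lam ^ 2), log_inv, show 1 - lam ^ 2 = (1 - lam) * (1 + lam) by ring,
    log_mul hq.ne' hp.ne', log_div (by positivity) hq.ne', log_mul (by positivity) hp.ne',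
    log_mul (by positivity) (by positivity), log_pow, log_pow]
  push_cast
  ring

theorem gaussian_covariance_optimization_general
    (lam ρ : ℝ) (hlam0 : 0 < lam) (hlam1 : lam < 1) (hρ : ρ < 1)
    (K' : Matrix (Fin 2) (Fin 2) ℝ) (hK' : K'.PosDef)
    (hle : (Matrix.of ![![(1 : ℝ), ρ], ![ρ, 1]] - K').PosSemidef) :
    (1 / 2) * Real.log (1 / (1 - lam ^ 2))
      - (lam / 2) * Real.log ((2 * π * Real.exp 1) ^ 2 * (1 - ρ) ^ 2 * (1 + lam) / (1 - lam))
    ≤ (1 / 2) * Real.log (2 * π * Real.exp 1 * K' 0 0)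
      + (1 / 2) * Real.log (2 * π * Real.exp 1 * K' 1 1)
      - ((1 + lam) / 2) * Real.log ((2 * π * Real.exp 1) ^ 2 * K'.det) := by
  have ha : 0 < K' 0 0 := hK'.diag_pos
  have hb : 0 < K' 1 1 := hK'.diag_pos
  have ha1 : K' 0 0 ≤ 1 := by simpa using hle.diag_nonneg (i := 0)
  have hb1 : K' 1 1 ≤ 1 := by simpa using hle.diag_nonneg (i := 1)
  have hcon : (ρ - K' 0 1) ^ 2 ≤ (1 - K' 0 0) * (1 - K' 1 1) := by
    simpa using hle.sq_apply_zero_one_le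
  have hdet : K'.det = √(K' 0 0 * K' 1 1) ^ 2 - |K' 0 1| ^ 2 := by
    rw [sq_sqrt (mul_pos ha hb).le, sq_abs, Matrix.det_fin_two,
      show K' 1 0 = K' 0 1 by simpa using (hK'.isHermitian.apply 1 0).symm]
    ring
  have hdet_pos : 0 < √(K' 0 0 * K' 1 1) ^ 2 - |K' 0 1| ^ 2 := hdet ▸ hK'.det_pos
  have hκ : 0 < 2 * π * exp 1 := by positivity
  rw [hdet, half_log_mul_add_half_log_mul_sub_mul_log_mul hκ ha hb hdet_pos,
    half_log_one_div_sub_mul_log_mul (by linarith) hlam1 hκ (by linarith)]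
  gcongr _ + ?_
  calc _ ≤ log (1 - ρ + |K' 0 1|)
          - (1 + lam) / 2 * log ((1 - ρ + |K' 0 1|) ^ 2 - |K' 0 1| ^ 2) :=
        le_log_add_sub_mul_log_add_sq_sub_sq (by linarith) hlam1 (by linarith) (abs_nonneg _)
    _ ≤ _ := by
      refine antitoneOn_log_sub_mul_log_sq_sub_sq hlam0.le (abs_nonneg _) ?_ ?_
        (sqrt_mul_le_sub_add_abs ha.le hb.le (mul_le_one₀ ha1 hb.le hb1) hcon)
      · exact lt_of_pow_lt_pow_left₀ 2 (sqrt_nonneg _) (by linarith)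
      · show |K' 0 1| < 1 - ρ + |K' 0 1|
        linarith

/-- **Lemma 2** (Gaussian covariance optimization): for `0 < λ < 1`, `λ ≤ ρ < 1`, and any
positive definite `K'` with `K' ⪯ [[1,ρ],[ρ,1]]`,
`h(X') + h(Y') − (1+λ)·h(X',Y') ≥ (1/2)log(1/(1−λ²)) − (λ/2)log((2πe)²(1−ρ)²(1+λ)/(1−λ))`
where `(X',Y') ~ N(0,K')`. -/
theorem gaussian_covariance_optimization
    (lam ρ : ℝ) (hlam0 : 0 < lam) (hlam1 : lam < 1) (hlamρ : lam ≤ ρ) (hρ : ρ < 1)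
    (K' : Matrix (Fin 2) (Fin 2) ℝ) (hK' : K'.PosDef)
    (hle : (Matrix.of ![![(1 : ℝ), ρ], ![ρ, 1]] - K').PosSemidef) :
    (1 / 2) * Real.log (1 / (1 - lam ^ 2))
      - (lam / 2) * Real.log ((2 * π * Real.exp 1) ^ 2 * (1 - ρ) ^ 2 * (1 + lam) / (1 - lam))
    ≤ (1 / 2) * Real.log (2 * π * Real.exp 1 * K' 0 0)
      + (1 / 2) * Real.log (2 * π * Real.exp 1 * K' 1 1)
      - ((1 + lam) / 2) * Real.log ((2 * π * Real.exp 1) ^ 2 * K'.det) :=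
  gaussian_covariance_optimization_general lam ρ hlam0 hlam1 hρ K' hK' hle
end

section
/- Define f(λ,s,q) = (1/2)·log((2πe)² s²) − ((1+λ)/2)·log((2πe)² s² (1−q²)) for s > 0 and q ∈ (−1,1). Let 0 < λ < 1 and λ ≤ ρ < 1. Then for all s > 0 and q ∈ (−1,1) satisfying s(1−q) ≤ 1 − ρ, one has f(λ,s,q) ≥ (1/2)·log(1/(1−λ²)) − (λ/2)·log((2πe)²·(1−ρ)²·(1+λ)/(1−λ)). -/
open Real

/-- The objective function `f(λ,s,q) = (1/2)log((2πe)²s²) − ((1+λ)/2)log((2πe)²s²(1−q²))`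
from the proof of Lemma 2 (with `s` playing the role of `σ²`). -/
noncomputable def wynerObjective (lam s q : ℝ) : ℝ :=
  (1 / 2) * Real.log ((2 * π * Real.exp 1) ^ 2 * s ^ 2)
    - ((1 + lam) / 2) * Real.log ((2 * π * Real.exp 1) ^ 2 * s ^ 2 * (1 - q ^ 2))

/-- Constrained minimization, case `ρ ≥ q`, in the proof of Lemma 2: for `0 < λ < 1`,
`λ ≤ ρ < 1`, and all `s > 0`, `q ∈ (−1,1)` with `s(1−q) ≤ 1−ρ`,
`f(λ,s,q) ≥ (1/2)log(1/(1−λ²)) − (λ/2)log((2πe)²(1−ρ)²(1+λ)/(1−λ))`. -/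
theorem wynerObjective_lower_bound_case_le
    (lam ρ : ℝ) (hlam0 : 0 < lam) (hlam1 : lam < 1) (hlamρ : lam ≤ ρ) (hρ : ρ < 1)
    (s q : ℝ) (hs : 0 < s) (hq : -1 < q) (hq' : q < 1)
    (hcon : s * (1 - q) ≤ 1 - ρ) :
    (1 / 2) * Real.log (1 / (1 - lam ^ 2))
      - (lam / 2) * Real.log ((2 * π * Real.exp 1) ^ 2 * (1 - ρ) ^ 2 * (1 + lam) / (1 - lam))
    ≤ wynerObjective lam s q := by
  have hπ : (0:ℝ) < π := Real.pi_pos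
  have hc : (0:ℝ) < (2 * π * Real.exp 1) ^ 2 := by positivity
  have h1q : (0:ℝ) < 1 - q := by linarith
  have h1q' : (0:ℝ) < 1 + q := by linarith
  have h1ρ : (0:ℝ) < 1 - ρ := by linarith
  have h1m : (0:ℝ) < 1 - lam := by linarith
  have h1n : (0:ℝ) < 1 + lam := by linarith
  set a := Real.log ((2 * π * Real.exp 1) ^ 2) with ha
  -- expand all the logs
  have hs2 : Real.log (s ^ 2) = 2 * Real.log s := by
    rw [Real.log_pow]; norm_num
  have hρ2 : Real.log ((1 - ρ) ^ 2) = 2 * Real.log (1 - ρ) := by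
    rw [Real.log_pow]; norm_num
  have e1 : Real.log ((2 * π * Real.exp 1) ^ 2 * s ^ 2) = a + 2 * Real.log s := by
    rw [Real.log_mul (ne_of_gt hc) (by positivity), hs2, ← ha]
  have e2 : Real.log ((2 * π * Real.exp 1) ^ 2 * s ^ 2 * (1 - q ^ 2))
      = a + 2 * Real.log s + (Real.log (1 - q) + Real.log (1 + q)) := by
    have hq2 : 1 - q ^ 2 = (1 - q) * (1 + q) := by ring
    rw [hq2, Real.log_mul (by positivity) (by positivity),
      Real.log_mul (ne_of_gt h1q) (ne_of_gt h1q'), e1]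
  have e3 : Real.log (1 / (1 - lam ^ 2)) = -(Real.log (1 - lam) + Real.log (1 + lam)) := by
    have hl2 : 1 - lam ^ 2 = (1 - lam) * (1 + lam) := by ring
    rw [one_div, Real.log_inv, hl2, Real.log_mul (ne_of_gt h1m) (ne_of_gt h1n)]
  have e4 : Real.log ((2 * π * Real.exp 1) ^ 2 * (1 - ρ) ^ 2 * (1 + lam) / (1 - lam))
      = a + 2 * Real.log (1 - ρ) + Real.log (1 + lam) - Real.log (1 - lam) := by
    rw [Real.log_div (by positivity) (ne_of_gt h1m),
      Real.log_mul (by positivity) (ne_of_gt h1n),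
      Real.log_mul (ne_of_gt hc) (by positivity), hρ2, ← ha]
  -- constraint in log form, multiplied by 2λ
  have hA : Real.log s + Real.log (1 - q) ≤ Real.log (1 - ρ) := by
    rw [← Real.log_mul (ne_of_gt hs) (ne_of_gt h1q)]
    exact Real.log_le_log (by positivity) hcon
  have hA2 : 2 * lam * Real.log s + 2 * lam * Real.log (1 - q)
      ≤ 2 * lam * Real.log (1 - ρ) := by nlinarith [hA]
  -- Gibbs-type inequality
  have hB1 : Real.log (1 - q) - Real.log (1 - lam) ≤ (1 - q) / (1 - lam) - 1 := by
    have := Real.log_le_sub_one_of_pos (show (0:ℝ) < (1 - q) / (1 - lam) by positivity)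
    rwa [Real.log_div (ne_of_gt h1q) (ne_of_gt h1m)] at this
  have hB2 : Real.log (1 + q) - Real.log (1 + lam) ≤ (1 + q) / (1 + lam) - 1 := by
    have := Real.log_le_sub_one_of_pos (show (0:ℝ) < (1 + q) / (1 + lam) by positivity)
    rwa [Real.log_div (ne_of_gt h1q') (ne_of_gt h1n)] at this
  have hB : (1 - lam) * (Real.log (1 - lam) - Real.log (1 - q))
      + (1 + lam) * (Real.log (1 + lam) - Real.log (1 + q)) ≥ 0 := by
    have b1 : (1 - lam) * (Real.log (1 - q) - Real.log (1 - lam)) ≤ (1 - q) - (1 - lam) := by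
      have := mul_le_mul_of_nonneg_left hB1 (le_of_lt h1m)
      rw [mul_sub (1 - lam) ((1-q)/(1-lam)) 1, mul_div_cancel₀ _ (ne_of_gt h1m)] at this
      linarith
    have b2 : (1 + lam) * (Real.log (1 + q) - Real.log (1 + lam)) ≤ (1 + q) - (1 + lam) := by
      have := mul_le_mul_of_nonneg_left hB2 (le_of_lt h1n)
      rw [mul_sub (1 + lam) ((1+q)/(1+lam)) 1, mul_div_cancel₀ _ (ne_of_gt h1n)] at this
      linarith
    nlinarith [b1, b2]
  rw [wynerObjective, e1, e2, e3, e4]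
  linarith [hA2, hB]
end

section
/- Define f(λ,s,q) = (1/2)·log((2πe)² s²) − ((1+λ)/2)·log((2πe)² s² (1−q²)) for s > 0 and q ∈ (−1,1). Let 0 < λ < 1 and 0 ≤ ρ < 1. Then for all s > 0 and q with ρ < q < 1 satisfying s(1+q) ≤ 1 + ρ, one has f(λ,s,q) ≥ f(λ,1,ρ) = (1/2)·log((2πe)²) − ((1+λ)/2)·log((2πe)²(1−ρ²)). -/
open Real

/-- Constrained minimization, case `ρ < q`, in the proof of Lemma 2: for `0 < λ < 1`,
`0 ≤ ρ < 1`, and all `s > 0`, `q ∈ (ρ,1)` with `s(1+q) ≤ 1+ρ`, one has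
`f(λ,s,q) ≥ f(λ,1,ρ) = (1/2)log((2πe)²) − ((1+λ)/2)log((2πe)²(1−ρ²))`. -/
theorem wynerObjective_lower_bound_case_gt
    (lam ρ : ℝ) (hlam0 : 0 < lam) (hlam1 : lam < 1) (hρ0 : 0 ≤ ρ) (hρ : ρ < 1)
    (s q : ℝ) (hs : 0 < s) (hq : ρ < q) (hq' : q < 1)
    (hcon : s * (1 + q) ≤ 1 + ρ) :
    wynerObjective lam 1 ρ ≤ wynerObjective lam s q ∧
      wynerObjective lam 1 ρ
        = (1 / 2) * Real.log ((2 * π * Real.exp 1) ^ 2)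
          - ((1 + lam) / 2) * Real.log ((2 * π * Real.exp 1) ^ 2 * (1 - ρ ^ 2)) := by
  have hpi := Real.pi_pos
  have hC : (0:ℝ) < (2 * π * Real.exp 1) ^ 2 := by positivity
  have h1q : (0:ℝ) < 1 - q ^ 2 := by nlinarith
  have h1ρ : (0:ℝ) < 1 - ρ ^ 2 := by nlinarith
  have hs2 : (0:ℝ) < s ^ 2 := by positivity
  have hlogCs : Real.log ((2 * π * Real.exp 1) ^ 2 * s ^ 2)
      = Real.log ((2 * π * Real.exp 1) ^ 2) + 2 * Real.log s := by
    have hls : Real.log (s ^ 2) = 2 * Real.log s := by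
      rw [Real.log_pow]; push_cast; ring
    rw [Real.log_mul hC.ne' hs2.ne', hls]
  have hlogCsq : Real.log ((2 * π * Real.exp 1) ^ 2 * s ^ 2 * (1 - q ^ 2))
      = Real.log ((2 * π * Real.exp 1) ^ 2) + 2 * Real.log s + Real.log (1 - q ^ 2) := by
    rw [Real.log_mul (by positivity) h1q.ne', hlogCs]
  have hlogCρ : Real.log ((2 * π * Real.exp 1) ^ 2 * (1 - ρ ^ 2))
      = Real.log ((2 * π * Real.exp 1) ^ 2) + Real.log (1 - ρ ^ 2) := by
    rw [Real.log_mul hC.ne' h1ρ.ne']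
  have hs1 : s < 1 := by nlinarith
  have hlogs : Real.log s < 0 := Real.log_neg hs hs1
  have hlogq : Real.log (1 - q ^ 2) ≤ Real.log (1 - ρ ^ 2) :=
    Real.log_le_log h1q (by nlinarith)
  constructor
  · simp only [wynerObjective, one_pow, mul_one, hlogCs, hlogCsq, hlogCρ]
    nlinarith [mul_pos hlam0 (neg_pos.mpr hlogs)]
  · simp [wynerObjective, hlogCρ]
end

section
/- Let 0 < λ ≤ ρ < 1. Then (1/2)·log(1/(1−λ²)) − (λ/2)·log((2πe)²·(1−ρ)²·(1+λ)/(1−λ)) ≤ (1/2)·log((2πe)²) − ((1+λ)/2)·log((2πe)²·(1−ρ²)). -/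
open Real

/-!
Writing every logarithm in terms of `log (1 ± λ)`, `log (1 ± ρ)` and `log ((2πe)²)`, the constant
`log ((2πe)²)` cancels and the difference of the two sides is `-½` times
`(1 + λ) log ((1 + ρ) / (1 + λ)) + (1 - λ) log ((1 - ρ) / (1 - λ))`,
i.e. a negated Kullback–Leibler divergence between the laws `((1 ± λ) / 2)` and `((1 ± ρ) / 2)`.
Gibbs' inequality, in the form `p log (q / p) ≤ q - p`, makes it nonpositive.
-/

lemma mul_log_div_le_sub {p q : ℝ} (hp : 0 < p) (hq : 0 < q) : p * log (q / p) ≤ q - p :=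
  calc p * log (q / p) ≤ p * (q / p - 1) :=
        mul_le_mul_of_nonneg_left (log_le_sub_one_of_pos (div_pos hq hp)) hp.le
    _ = q - p := by field_simp

lemma mul_log_div_add_mul_log_div_nonpos {p₁ p₂ q₁ q₂ : ℝ} (hp₁ : 0 < p₁) (hp₂ : 0 < p₂)
    (hq₁ : 0 < q₁) (hq₂ : 0 < q₂) (hsum : p₁ + p₂ = q₁ + q₂) :
    p₁ * log (q₁ / p₁) + p₂ * log (q₂ / p₂) ≤ 0 := by
  linarith [mul_log_div_le_sub hp₁ hq₁, mul_log_div_le_sub hp₂ hq₂]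

lemma log_one_sub_sq {x : ℝ} (h₁ : 1 - x ≠ 0) (h₂ : 1 + x ≠ 0) :
    log (1 - x ^ 2) = log (1 - x) + log (1 + x) := by
  rw [← log_mul h₁ h₂]
  ring_nf

/-- Comparison of the two candidate minima in the proof of Lemma 2: for `0 < λ ≤ ρ < 1`,
`f(λ,(1−ρ)/(1−λ),λ) ≤ f(λ,1,ρ)`, i.e. `(1/2)log(1/(1−λ²)) − (λ/2)log((2πe)²(1−ρ)²(1+λ)/(1−λ))
≤ (1/2)log((2πe)²) − ((1+λ)/2)log((2πe)²(1−ρ²))`. -/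
theorem candidate_minima_comparison
    (lam ρ : ℝ) (hlam0 : 0 < lam) (hlamρ : lam ≤ ρ) (hρ : ρ < 1) :
    (1 / 2) * Real.log (1 / (1 - lam ^ 2))
      - (lam / 2) * Real.log ((2 * π * Real.exp 1) ^ 2 * (1 - ρ) ^ 2 * (1 + lam) / (1 - lam))
    ≤ (1 / 2) * Real.log ((2 * π * Real.exp 1) ^ 2)
      - ((1 + lam) / 2) * Real.log ((2 * π * Real.exp 1) ^ 2 * (1 - ρ ^ 2)) := by
  have hlam₁ : 0 < 1 - lam := by linarith
  have hlam₂ : 0 < 1 + lam := by linarith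
  have hρ₁ : 0 < 1 - ρ := by linarith
  have hρ₂ : 0 < 1 + ρ := by linarith
  have hC : 0 < (2 * π * exp 1) ^ 2 := by positivity
  have gibbs := mul_log_div_add_mul_log_div_nonpos hlam₂ hlam₁ hρ₂ hρ₁ (by ring)
  rw [log_div hρ₂.ne' hlam₂.ne', log_div hρ₁.ne' hlam₁.ne'] at gibbs
  rw [one_div (1 - lam ^ 2), log_inv, log_one_sub_sq hlam₁.ne' hlam₂.ne',
    log_div (by positivity) hlam₁.ne', log_mul (by positivity) hlam₂.ne',
    log_mul hC.ne' (by positivity), log_pow (1 - ρ) 2, log_mul hC.ne' (by nlinarith),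
    log_one_sub_sq hρ₁.ne' hρ₂.ne']
  linear_combination (1 / 2 : ℝ) * gibbs
end
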